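/- Let K⟨X⟩ be a free algebra with monomial ordering ≺, I an ideal with Gröbner basis 𝒢. The images of the normal words N(I) = {w ∈ 𝔅 : LM(g) ∤ w for all g ∈ 𝒢} form a K-vector-space basis of the quotient algebra K⟨X⟩/I. -/

import Mathlib

/-!
Reduction modulo `𝒢`: if `w = a * LM(g) * b` with `g ∈ 𝒢 ⊆ I`, then `w` minus the suitable multiple
of `a * g * b` involves only words `≺ w`, so by well-founded induction every word, hence every
element, is congruent modulo `I` to a combination of normal words. Conversely, a nonzero element
of `I` supported on normal words would have a normal leading word, whereas the Gröbner property
makes it divisible by some `LM(g)`.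
-/

open scoped Classical

/-- Words in the letters `X_1, …, X_n`: the free monoid on `Fin n`. -/
abbrev Word (n : ℕ) := FreeMonoid (Fin n)

/-- The free associative `K`-algebra `K⟨X_1,…,X_n⟩`, realised as the monoid algebra of the
free monoid on `Fin n`. -/
abbrev FreeAlg (K : Type) [Field K] (n : ℕ) := MonoidAlgebra K (Word n)

/-- The word `v` divides the word `u` if `u = w * v * s` for some words `w, s`. -/
def WDvd {n : ℕ} (v u : Word n) : Prop := ∃ w s : Word n, u = w * v * s

/-- The monomial of `K⟨X⟩` corresponding to a word. -/
noncomputable def mono {K : Type} [Field K] {n : ℕ} (w : Word n) : FreeAlg K n :=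
  MonoidAlgebra.single w 1

/-- The two-sided ideal of `K⟨X⟩` generated by a set of words (a monomial ideal). -/
noncomputable def monIdeal (K : Type) [Field K] {n : ℕ} (Ω : Set (Word n)) :
    TwoSidedIdeal (FreeAlg K n) :=
  TwoSidedIdeal.span (mono '' Ω)

/-- A ring is semiprime if `a R a = 0` implies `a = 0`. -/
def IsSemiprimeRing (R : Type*) [Ring R] : Prop :=
  ∀ a : R, (∀ r : R, a * r * a = 0) → a = 0

/-- A ring is semiprimitive (Jacobson semisimple) if its Jacobson radical is zero. -/
def IsSemiprimitiveRing (R : Type*) [Ring R] : Prop :=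
  (⊥ : TwoSidedIdeal R).jacobson = ⊥

/-- A monomial ordering on the words: a multiplication-compatible well-ordering. -/
structure MonOrder (n : ℕ) where
  /-- the strict order relation -/
  lt : Word n → Word n → Prop
  trichotomous : ∀ u v : Word n, lt u v ∨ u = v ∨ lt v u
  trans : ∀ {u v w : Word n}, lt u v → lt v w → lt u w
  wf : WellFounded lt
  mul_compat : ∀ u v w s : Word n, lt u v → lt (w * u * s) (w * v * s)
  one_lt : ∀ u w s : Word n, w * u * s ≠ u → lt u (w * u * s)

/-- The leading monomial (word) of a nonzero element of `K⟨X⟩` with respect to a monomial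
ordering: the `≺`-largest word in its support (and `1` by convention for `0`). -/
noncomputable def LM {K : Type} [Field K] {n : ℕ} (o : MonOrder n) (f : FreeAlg K n) :
    Word n :=
  if h : ∃ w ∈ f.coeff.support, ∀ v ∈ f.coeff.support, v ≠ w → o.lt v w then h.choose else 1

/-- The weight degree of a word, where the letter `i` has weight `wt i`. -/
def wdeg {n : ℕ} (wt : Fin n → ℕ) (u : Word n) : ℕ :=
  (FreeMonoid.toList u |>.map wt).sum

/-- `f` is homogeneous of degree `p` with respect to the weight grading. -/
def IsHomogeneous {K : Type} [Field K] {n : ℕ} (wt : Fin n → ℕ) (f : FreeAlg K n)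
    (p : ℕ) : Prop :=
  ∀ w ∈ f.coeff.support, wdeg wt w = p

/-- The (highest-degree) leading homogeneous component of `f` with respect to the weight
grading. -/
noncomputable def LH {K : Type} [Field K] {n : ℕ} (wt : Fin n → ℕ) (f : FreeAlg K n) :
    FreeAlg K n :=
  MonoidAlgebra.ofCoeff (Finsupp.filter (fun w => wdeg wt w = f.coeff.support.sup (wdeg wt)) f.coeff)

/-- `𝒢` is a Gröbner basis of the two-sided ideal `I` w.r.t. the monomial ordering `o`:
`𝒢 ⊆ I ∖ {0}` and the leading monomials of `I` and of `𝒢` generate the same monomial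
ideal. -/
def IsGrobnerBasis {K : Type} [Field K] {n : ℕ} (o : MonOrder n)
    (𝒢 : Set (FreeAlg K n)) (I : TwoSidedIdeal (FreeAlg K n)) : Prop :=
  𝒢 ⊆ {f | f ∈ I ∧ f ≠ 0} ∧
    monIdeal K (LM o '' {f : FreeAlg K n | f ∈ I ∧ f ≠ 0}) = monIdeal K (LM o '' 𝒢)

/-- The natural `K`-algebra structure on the quotient of a `K`-algebra by a ring
congruence. -/
noncomputable instance ringConQuotientAlgebra {K A : Type*} [CommSemiring K] [Semiring A]
    [Algebra K A] (c : RingCon A) : Algebra K c.Quotient :=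
  { algebraMap := (RingCon.mk' c).comp (algebraMap K A)
    smul := (· • ·)
    commutes' := fun k => Quotient.ind' fun a =>
      congrArg (RingCon.toQuotient (c := c)) (Algebra.commutes k a)
    smul_def' := fun k => Quotient.ind' fun a =>
      congrArg (RingCon.toQuotient (c := c)) (Algebra.smul_def k a) }

/-- The quotient map as a `K`-algebra homomorphism. -/
noncomputable def quotAlgHom {K A : Type*} [CommSemiring K] [Semiring A] [Algebra K A]
    (c : RingCon A) : A →ₐ[K] c.Quotient :=
  { RingCon.mk' c with commutes' := fun _ => rfl }

namespace MonOrder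

variable {n : ℕ} (o : MonOrder n)

instance isWellOrder : IsWellOrder (Word n) o.lt where
  wf := o.wf
  trichotomous u v huv hvu := ((o.trichotomous u v).resolve_left huv).resolve_right hvu

theorem exists_max {s : Finset (Word n)} (hs : s.Nonempty) :
    ∃ w ∈ s, ∀ v ∈ s, v ≠ w → o.lt v w :=
  let _ := IsWellOrder.linearOrder o.lt
  ⟨s.max' hs, s.max'_mem hs, fun v hv hne => lt_of_le_of_ne (s.le_max' v hv) hne⟩

end MonOrder

namespace WDvd

variable {n : ℕ} {v u : Word n}

theorem refl (v : Word n) : WDvd v v := ⟨1, 1, by simp⟩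

theorem mul_left (h : WDvd v u) (a : Word n) : WDvd v (a * u) := by
  obtain ⟨w, s, rfl⟩ := h
  exact ⟨a * w, s, by simp only [mul_assoc]⟩

theorem mul_right (h : WDvd v u) (b : Word n) : WDvd v (u * b) := by
  obtain ⟨w, s, rfl⟩ := h
  exact ⟨w, s * b, by simp only [mul_assoc]⟩

end WDvd

section FreeAlg

open MonoidAlgebra

variable {K : Type} [Field K] {n : ℕ}

theorem mono_mul_mono (a b : Word n) : mono (K := K) a * mono b = mono (a * b) := by
  rw [mono, mono, mono, single_mul_single, one_mul]

theorem mem_support_mono (w : Word n) : w ∈ (mono (K := K) w).coeff.support := by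
  simp [mono]

theorem mono_mem_supported {s : Set (Word n)} {w : Word n} (hw : w ∈ s) :
    mono (K := K) w ∈ supported K K s := by
  rw [mem_supported, mono, coeff_single, Finsupp.support_single _ one_ne_zero,
    Finset.coe_singleton, Set.singleton_subset_iff]
  exact hw

theorem mono_mul_mul_mono_mem_supported {s : Set (Word n)} {x : FreeAlg K n}
    (hx : x ∈ supported K K s) (a b : Word n) :
    mono a * x * mono b ∈ supported K K ((fun v => a * v * b) '' s) := by
  intro u hu
  obtain ⟨y, hy, rfl⟩ := Finset.mem_image.mp (support_coeff_mul_single_subset _ _ _ hu)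
  obtain ⟨v, hv, rfl⟩ := Finset.mem_image.mp (support_coeff_single_mul_subset _ _ _ hy)
  exact ⟨v, hx hv, rfl⟩

theorem mem_supported_of_mem_monIdeal {Ω : Set (Word n)} {x : FreeAlg K n}
    (hx : x ∈ monIdeal K Ω) : x ∈ supported K K {w | ∃ v ∈ Ω, WDvd v w} := by
  induction hx using TwoSidedIdeal.span_induction with
  | mem x hx =>
    obtain ⟨v, hv, rfl⟩ := hx
    exact mono_mem_supported ⟨v, hv, WDvd.refl v⟩
  | zero => exact zero_mem _
  | add x y _ _ hx hy => exact add_mem hx hy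
  | neg x _ hx => exact neg_mem hx
  | left_absorb a x _ hx =>
    intro w hw
    obtain ⟨p, -, q, hq, rfl⟩ := Finset.mem_mul.mp (support_coeff_mul_subset a x hw)
    obtain ⟨v, hv, hvq⟩ := hx hq
    exact ⟨v, hv, hvq.mul_left p⟩
  | right_absorb b x _ hx =>
    intro w hw
    obtain ⟨p, hp, q, -, rfl⟩ := Finset.mem_mul.mp (support_coeff_mul_subset x b hw)
    obtain ⟨v, hv, hvp⟩ := hx hp
    exact ⟨v, hv, hvp.mul_right q⟩

theorem exists_wdvd_of_mono_mem_monIdeal {Ω : Set (Word n)} {w : Word n}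
    (h : mono (K := K) w ∈ monIdeal K Ω) : ∃ v ∈ Ω, WDvd v w :=
  mem_supported_of_mem_monIdeal h (mem_support_mono w)

variable (o : MonOrder n)

theorem LM_spec {f : FreeAlg K n} (hf : f ≠ 0) :
    LM o f ∈ f.coeff.support ∧ ∀ v ∈ f.coeff.support, v ≠ LM o f → o.lt v (LM o f) := by
  have h := o.exists_max (Finsupp.support_nonempty_iff.mpr (mt coeff_eq_zero.mp hf))
  rw [LM, dif_pos h]
  exact h.choose_spec

theorem sub_single_LM_mem_supported {f : FreeAlg K n} (hf : f ≠ 0) :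
    f - single (LM o f) (f.coeff (LM o f)) ∈ supported K K {v | o.lt v (LM o f)} := by
  rw [mem_supported']
  intro v hv
  rw [coeff_sub, Finsupp.sub_apply, coeff_single]
  by_cases hvL : v = LM o f
  · rw [hvL, Finsupp.single_eq_same, sub_self]
  · rw [Finsupp.single_eq_of_ne hvL, sub_zero]
    exact Finsupp.notMem_support_iff.mp fun hmem => hv ((LM_spec o hf).2 v hmem hvL)

theorem mono_sub_smul_mem_supported_lt {g : FreeAlg K n} (hg : g ≠ 0) (a b : Word n) :
    mono (a * LM o g * b) - (g.coeff (LM o g))⁻¹ • (mono a * g * mono b) ∈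
      supported K K {v | o.lt v (a * LM o g * b)} := by
  have hc : g.coeff (LM o g) ≠ 0 := Finsupp.mem_support_iff.mp (LM_spec o hg).1
  set L := LM o g
  set c := g.coeff L
  set r := g - single L c
  have hgr : g = r + c • mono L := by
    rw [mono, smul_single, smul_eq_mul, mul_one, sub_add_cancel]
  have hred : mono (a * L * b) - c⁻¹ • (mono a * g * mono b) =
      -(c⁻¹ • (mono a * r * mono b)) := by
    rw [hgr, mul_add, add_mul, mul_smul_comm, smul_mul_assoc, mono_mul_mono, mono_mul_mono,
      smul_add, smul_smul, inv_mul_cancel₀ hc, one_smul]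
    abel
  rw [hred]
  refine neg_mem (Submodule.smul_mem _ _ (supported_mono ?_
    (mono_mul_mul_mono_mem_supported (sub_single_LM_mem_supported o hg) a b)))
  rintro _ ⟨v, hv, rfl⟩
  exact o.mul_compat v (LM o g) a b hv

end FreeAlg

section Quotient

variable (K : Type*) {A : Type*} [CommSemiring K] [Ring A] [Algebra K A]

theorem quotAlgHom_surjective (c : RingCon A) : Function.Surjective (quotAlgHom (K := K) c) :=
  Quotient.mk''_surjective

theorem quotAlgHom_ringCon_eq_zero_iff (I : TwoSidedIdeal A) {x : A} :
    quotAlgHom (K := K) I.ringCon x = 0 ↔ x ∈ I :=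
  (RingCon.eq _).trans <| (I.rel_iff x 0).trans <| by rw [sub_zero]

end Quotient

section GrobnerBasis

open MonoidAlgebra Submodule

variable {K : Type} [Field K] {n : ℕ} {o : MonOrder n} {I : TwoSidedIdeal (FreeAlg K n)}
  {𝒢 : Set (FreeAlg K n)}

variable (o 𝒢) in
def normalWords : Set (Word n) := {w | ∀ g ∈ 𝒢, ¬ WDvd (LM o g) w}

theorem IsGrobnerBasis.exists_LM_wdvd_LM (hGB : IsGrobnerBasis o 𝒢 I) {f : FreeAlg K n}
    (hf : f ∈ I) (hf0 : f ≠ 0) : ∃ g ∈ 𝒢, WDvd (LM o g) (LM o f) := by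
  have hLM : mono (LM o f) ∈ monIdeal K (LM o '' 𝒢) :=
    hGB.2 ▸ TwoSidedIdeal.subset_span ⟨LM o f, ⟨f, ⟨hf, hf0⟩, rfl⟩, rfl⟩
  obtain ⟨_, ⟨g, hg, rfl⟩, hdvd⟩ := exists_wdvd_of_mono_mem_monIdeal hLM
  exact ⟨g, hg, hdvd⟩

theorem IsGrobnerBasis.eq_zero_of_mem_supported_normalWords (hGB : IsGrobnerBasis o 𝒢 I)
    {f : FreeAlg K n} (hf : f ∈ supported K K (normalWords o 𝒢)) (hfI : f ∈ I) : f = 0 := by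
  by_contra hf0
  obtain ⟨g, hg, hdvd⟩ := hGB.exists_LM_wdvd_LM hfI hf0
  exact hf (LM_spec o hf0).1 g hg hdvd

theorem IsGrobnerBasis.span_normalWords_eq_top (hGB : IsGrobnerBasis o 𝒢 I) :
    span K (Set.range fun u : normalWords o 𝒢 => quotAlgHom (K := K) I.ringCon (mono u.1)) =
      ⊤ := by
  set π := (quotAlgHom (K := K) I.ringCon).toLinearMap
  set S := span K (Set.range fun u : normalWords o 𝒢 => quotAlgHom (K := K) I.ringCon (mono u.1))
  have hmono (w : Word n) : mono w ∈ S.comap π := by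
    induction w using o.wf.induction with
    | _ w ih =>
      by_cases hw : w ∈ normalWords o 𝒢
      · exact subset_span ⟨⟨w, hw⟩, rfl⟩
      obtain ⟨g, hg, a, b, rfl⟩ : ∃ g ∈ 𝒢, WDvd (LM o g) w := by
        simpa [normalWords] using hw
      obtain ⟨hgI, hg0⟩ := hGB.1 hg
      have hlt : supported K K {v | o.lt v (a * LM o g * b)} ≤ S.comap π := by
        rw [supported_eq_span_single, span_le]
        rintro _ ⟨v, hv, rfl⟩
        exact ih v hv
      have hI : π (mono a * g * mono b) = 0 :=
        (quotAlgHom_ringCon_eq_zero_iff K I).mpr (I.mul_mem_right _ _ (I.mul_mem_left _ _ hgI))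
      have hred := hlt (mono_sub_smul_mem_supported_lt o hg0 a b)
      rwa [mem_comap, map_sub, map_smul, hI, smul_zero, sub_zero] at hred
  have hcomap : ⊤ ≤ S.comap π :=
    (MonoidAlgebra.basis (Word n) K).span_eq ▸ span_le.mpr (Set.range_subset_iff.mpr hmono)
  refine eq_top_iff'.mpr fun q => ?_
  obtain ⟨f, rfl⟩ := quotAlgHom_surjective K I.ringCon q
  exact hcomap mem_top

theorem IsGrobnerBasis.linearIndependent_normalWords (hGB : IsGrobnerBasis o 𝒢 I) :
    LinearIndependent K fun u : normalWords o 𝒢 => quotAlgHom (K := K) I.ringCon (mono u.1) := by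
  have hmono : LinearIndependent K fun u : normalWords o 𝒢 => mono (K := K) u.1 :=
    (MonoidAlgebra.basis (Word n) K).linearIndependent.comp _ Subtype.val_injective
  refine hmono.map (f := (quotAlgHom (K := K) I.ringCon).toLinearMap) ?_
  refine disjoint_def.mpr fun f hf hker => hGB.eq_zero_of_mem_supported_normalWords ?_
    ((quotAlgHom_ringCon_eq_zero_iff K I).mp hker)
  exact span_le.mpr (Set.range_subset_iff.mpr fun u => mono_mem_supported u.2) hf

end GrobnerBasis

/-- **Macaulay basis theorem for noncommutative Gröbner bases**: if `𝒢` is a Gröbner basis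
of an ideal `I` of `K⟨X⟩` w.r.t. a monomial ordering `≺`, then the images of the normal
words `N(I) = {w : LM(g) ∤ w for all g ∈ 𝒢}` form a `K`-vector space basis of `K⟨X⟩/I`. -/
theorem normal_words_basis {K : Type} [Field K] {n : ℕ}
    (o : MonOrder n) (I : TwoSidedIdeal (FreeAlg K n)) (𝒢 : Set (FreeAlg K n))
    (hGB : IsGrobnerBasis o 𝒢 I) :
    LinearIndependent K
        (fun u : {w : Word n // ∀ g ∈ 𝒢, ¬ WDvd (LM o g) w} =>
          quotAlgHom (K := K) I.ringCon (mono u.1)) ∧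
      Submodule.span K
        (Set.range (fun u : {w : Word n // ∀ g ∈ 𝒢, ¬ WDvd (LM o g) w} =>
          quotAlgHom (K := K) I.ringCon (mono u.1))) = ⊤ :=
  ⟨hGB.linearIndependent_normalWords, hGB.span_normalWords_eq_top⟩
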